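/- arXiv:2405.11590 — 7 statements merged into one kernel-verified Lean document; each statement's English description precedes it below -/
import Mathlib

section
/- Let f : ℝ^{d×r} → ℝ be differentiable and λ > 0. For every x ∈ ℝ^{d×r}, the two components of the landing field are orthogonal in the Frobenius inner product: ⟨grad f(x), x(xᵀx − I_r)⟩ = 0, i.e. ⟨skew(∇f(x)xᵀ)x, x(xᵀx − I_r)⟩ = 0. Consequently Λ(x) = grad f(x) + λ x(xᵀx − I_r) = 0 if and only if grad f(x) = 0 and x(xᵀx − I_r) = 0. -/
open Matrix BigOperators Finset

noncomputable section

namespace DRFGT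

/-- Frobenius inner product `⟨A, B⟩ = Tr (A Bᵀ)`. -/
def finner {m k : Type*} [Fintype m] [Fintype k] (A B : Matrix m k ℝ) : ℝ :=
  Matrix.trace (A * Bᵀ)

/-- Frobenius norm `‖A‖_F = √⟨A, A⟩`. -/
def fnorm {m k : Type*} [Fintype m] [Fintype k] (A : Matrix m k ℝ) : ℝ :=
  Real.sqrt (finner A A)

/-- Skew part of a square matrix, `skew(A) = (A − Aᵀ)/2`. -/
def mskew {m : Type*} [Fintype m] (A : Matrix m m ℝ) : Matrix m m ℝ :=
  (2 : ℝ)⁻¹ • (A - Aᵀ)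

/-- Symmetric part of a square matrix, `sym(A) = (A + Aᵀ)/2`. -/
def msym {m : Type*} [Fintype m] (A : Matrix m m ℝ) : Matrix m m ℝ :=
  (2 : ℝ)⁻¹ • (A + Aᵀ)

/-- Relative (Riemannian) gradient `grad f(x) = skew(∇f(x) xᵀ) x`, where `Df` denotes the
Euclidean gradient `∇f` of `f`. -/
def rgrad {d r : ℕ} (Df : Matrix (Fin d) (Fin r) ℝ → Matrix (Fin d) (Fin r) ℝ)
    (x : Matrix (Fin d) (Fin r) ℝ) : Matrix (Fin d) (Fin r) ℝ :=
  mskew (Df x * xᵀ) * x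

/-- Landing field `Λ(x) = grad f(x) + λ x (xᵀ x − I_r)`. -/
def landing {d r : ℕ} (Df : Matrix (Fin d) (Fin r) ℝ → Matrix (Fin d) (Fin r) ℝ) (lam : ℝ)
    (x : Matrix (Fin d) (Fin r) ℝ) : Matrix (Fin d) (Fin r) ℝ :=
  rgrad Df x + lam • (x * (xᵀ * x - 1))

/-- The Stiefel manifold `St(d,r) = {x : xᵀ x = I_r}`. -/
def St (d r : ℕ) : Set (Matrix (Fin d) (Fin r) ℝ) := {x | xᵀ * x = 1}

/-- The safety region `St(d,r)^ε = {x : ‖xᵀ x − I_r‖_F ≤ ε}`. -/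
def StEps (d r : ℕ) (ε : ℝ) : Set (Matrix (Fin d) (Fin r) ℝ) :=
  {x | fnorm (xᵀ * x - 1) ≤ ε}

/-- The merit function `𝓛(x) = f(x) − ½⟨sym(xᵀ∇f(x)), xᵀx − I_r⟩ + γ·¼‖xᵀx − I_r‖_F²`. -/
def merit {d r : ℕ} (f : Matrix (Fin d) (Fin r) ℝ → ℝ)
    (Df : Matrix (Fin d) (Fin r) ℝ → Matrix (Fin d) (Fin r) ℝ) (γ : ℝ)
    (x : Matrix (Fin d) (Fin r) ℝ) : ℝ :=
  f x - (2 : ℝ)⁻¹ * finner (msym (xᵀ * Df x)) (xᵀ * x - 1)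
    + γ * (4 : ℝ)⁻¹ * fnorm (xᵀ * x - 1) ^ 2

/-- The gradient of the merit function at on-manifold points:
`∇𝓛(x) = ∇f(x) − x · sym(xᵀ∇f(x))` for `x ∈ St(d,r)`. -/
def meritGradSt {d r : ℕ} (Df : Matrix (Fin d) (Fin r) ℝ → Matrix (Fin d) (Fin r) ℝ)
    (x : Matrix (Fin d) (Fin r) ℝ) : Matrix (Fin d) (Fin r) ℝ :=
  Df x - x * msym (xᵀ * Df x)

/-- `x'` is the polar factor of a full-column-rank `x`, i.e. the projection `Proj_St(x)` of `x`
onto the Stiefel manifold: if `x = U S Vᵀ` is a thin SVD then `x' = U Vᵀ`, equivalently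
`x'ᵀ x' = I_r` and `x = x' P` for a positive definite `P` (namely `P = V S Vᵀ`). -/
def IsPolarFactor {d r : ℕ} (x x' : Matrix (Fin d) (Fin r) ℝ) : Prop :=
  x'ᵀ * x' = 1 ∧ ∃ P : Matrix (Fin r) (Fin r) ℝ, P.PosDef ∧ x = x' * P

/-- Frobenius distance from `x` to a set `S`: `dist(S,x) = inf_{y ∈ S} ‖x − y‖_F`. -/
def fdist {d r : ℕ} (S : Set (Matrix (Fin d) (Fin r) ℝ)) (x : Matrix (Fin d) (Fin r) ℝ) : ℝ :=
  sInf ((fun y => fnorm (x - y)) '' S)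

/-- Network average `z̄ = (1/n) Σᵢ zᵢ`. -/
def avg {n d r : ℕ} (z : Fin n → Matrix (Fin d) (Fin r) ℝ) : Matrix (Fin d) (Fin r) ℝ :=
  (n : ℝ)⁻¹ • ∑ i, z i

/-- Frobenius norm of a stacked family: `‖𝐳‖_F = (Σᵢ ‖zᵢ‖_F²)^{1/2}`. -/
def snorm {n d r : ℕ} (z : Fin n → Matrix (Fin d) (Fin r) ℝ) : ℝ :=
  Real.sqrt (∑ i, fnorm (z i) ^ 2)



lemma finner_comm {m k : Type*} [Fintype m] [Fintype k] (A B : Matrix m k ℝ) :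
    finner A B = finner B A := by
  unfold finner
  rw [← Matrix.trace_transpose (A * Bᵀ), Matrix.transpose_mul, Matrix.transpose_transpose]

lemma finner_add_left {m k : Type*} [Fintype m] [Fintype k] (A B C : Matrix m k ℝ) :
    finner (A + B) C = finner A C + finner B C := by
  unfold finner; rw [Matrix.add_mul, Matrix.trace_add]

lemma finner_smul_left {m k : Type*} [Fintype m] [Fintype k] (c : ℝ) (A B : Matrix m k ℝ) :
    finner (c • A) B = c * finner A B := by
  unfold finner; rw [Matrix.smul_mul, Matrix.trace_smul]; rfl

lemma finner_smul_right {m k : Type*} [Fintype m] [Fintype k] (c : ℝ) (A B : Matrix m k ℝ) :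
    finner A (c • B) = c * finner A B := by
  rw [finner_comm, finner_smul_left, finner_comm]

lemma finner_self_nonneg {m k : Type*} [Fintype m] [Fintype k] (A : Matrix m k ℝ) :
    0 ≤ finner A A := by
  unfold finner Matrix.trace
  refine Finset.sum_nonneg fun i _ => ?_
  simp only [Matrix.diag_apply, Matrix.mul_apply, Matrix.transpose_apply]
  exact Finset.sum_nonneg fun j _ => mul_self_nonneg _

lemma finner_self_eq_zero {m k : Type*} [Fintype m] [Fintype k] (A : Matrix m k ℝ) :
    finner A A = 0 ↔ A = 0 := by
  constructor
  · intro h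
    ext i j
    have h1 : ∀ i ∈ Finset.univ, (0:ℝ) ≤ (A * Aᵀ).diag i := fun i _ => by
      simp only [Matrix.diag_apply, Matrix.mul_apply, Matrix.transpose_apply]
      exact Finset.sum_nonneg fun j _ => mul_self_nonneg _
    have h2 := (Finset.sum_eq_zero_iff_of_nonneg h1).mp h
    have h3 := h2 i (Finset.mem_univ i)
    simp only [Matrix.diag_apply, Matrix.mul_apply, Matrix.transpose_apply] at h3
    have h4 : ∀ j ∈ Finset.univ, (0:ℝ) ≤ A i j * A i j := fun j _ => mul_self_nonneg _
    have h5 := (Finset.sum_eq_zero_iff_of_nonneg h4).mp h3 j (Finset.mem_univ j)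
    simpa [mul_self_eq_zero] using h5
  · intro h; simp [h, finner]

/-- For any differentiable `f` (with Euclidean gradient `Df = ∇f`) and `λ > 0`,
the two components of the landing field are orthogonal in the Frobenius inner product:
`⟨grad f(x), x(xᵀx − I_r)⟩ = 0`, and consequently `Λ(x) = 0` iff `grad f(x) = 0` and
`x(xᵀx − I_r) = 0`. -/
theorem landing_components_orthogonal {d r : ℕ} (lam : ℝ) (hlam : 0 < lam)
    (Df : Matrix (Fin d) (Fin r) ℝ → Matrix (Fin d) (Fin r) ℝ)
    (x : Matrix (Fin d) (Fin r) ℝ) :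
    finner (rgrad Df x) (x * (xᵀ * x - 1)) = 0 ∧
      (landing Df lam x = 0 ↔ rgrad Df x = 0 ∧ x * (xᵀ * x - 1) = 0):= by
  classical
  set g := rgrad Df x with hg
  set p := x * (xᵀ * x - 1) with hp
  -- orthogonality
  have horth : finner g p = 0 := by
    have hS : (mskew (Df x * xᵀ))ᵀ = -(mskew (Df x * xᵀ)) := by
      unfold mskew
      rw [Matrix.transpose_smul, Matrix.transpose_sub, Matrix.transpose_transpose]
      rw [← smul_neg, neg_sub]
    set S := mskew (Df x * xᵀ)
    have hB : (x * (xᵀ * x - 1) * xᵀ)ᵀ = x * (xᵀ * x - 1) * xᵀ := by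
      simp [Matrix.transpose_mul, Matrix.transpose_sub, Matrix.mul_assoc]
    set B := x * (xᵀ * x - 1) * xᵀ with hBdef
    have key : finner g p = Matrix.trace (S * B) := by
      unfold finner
      rw [hg, hp]
      show Matrix.trace (S * x * (x * (xᵀ * x - 1))ᵀ) = _
      rw [Matrix.transpose_mul, Matrix.transpose_sub, Matrix.transpose_mul,
        Matrix.transpose_transpose, Matrix.transpose_one, hBdef]
      simp [Matrix.mul_assoc]
    have : Matrix.trace (S * B) = - Matrix.trace (S * B) := by
      conv_lhs => rw [← Matrix.trace_transpose (S * B), Matrix.transpose_mul, hS, hB]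
      rw [Matrix.mul_neg, Matrix.trace_neg, Matrix.trace_mul_comm]
    rw [key]; linarith
  refine ⟨horth, ?_, ?_⟩
  · intro h
    have hΛ : g + lam • p = 0 := h
    have hexp : finner (g + lam • p) (g + lam • p)
        = finner g g + lam * (lam * finner p p) := by
      rw [finner_add_left, finner_comm g (g + lam • p), finner_comm (lam • p) (g + lam • p),
        finner_add_left, finner_add_left, finner_smul_left, finner_smul_right,
        finner_smul_right, finner_comm p g, horth, finner_smul_left]
      ring
    rw [hΛ] at hexp
    have h0 : finner (0 : Matrix (Fin d) (Fin r) ℝ) 0 = 0 := by simp [finner]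
    rw [h0] at hexp
    have hgn := finner_self_nonneg g
    have hpn := finner_self_nonneg p
    have hlp : 0 ≤ lam * (lam * finner p p) := by positivity
    have hg0 : finner g g = 0 := by linarith
    have h1 : lam * (lam * finner p p) = 0 := by linarith
    have hp0 : finner p p = 0 := by
      rcases mul_eq_zero.mp h1 with h' | h'
      · exact absurd h' hlam.ne'
      rcases mul_eq_zero.mp h' with h'' | h''
      · exact absurd h'' hlam.ne'
      · exact h''
    exact ⟨(finner_self_eq_zero g).mp hg0, (finner_self_eq_zero p).mp hp0⟩
  · rintro ⟨h1, h2⟩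
    show g + lam • p = 0
    rw [h1, h2, smul_zero, add_zero]


end DRFGT
end
end

section
/- Let x ∈ ℝ^{d×r} have full column rank with thin singular value decomposition x = USVᵀ and polar factor x' = UVᵀ (so x' ∈ St(d,r)). Then for every matrix g ∈ ℝ^{d×r}, ⟨g − x'·sym(x'ᵀg), x − x'⟩ = 0. In particular, for any function f differentiable at x', ⟨∇𝓛(x'), x − x'⟩ = 0, where ∇𝓛(x') = ∇f(x') − x'·sym(x'ᵀ∇f(x')) is the gradient of the merit function at the on-manifold point x'. -/
open Matrix BigOperators Finset

noncomputable section

namespace DRFGT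

/-! At `x = x' P`, the error `x − x' = x'(P − I)` is `x'` times a symmetric matrix, so pairing any
`h` with it amounts to pairing `x'ᵀh` with `P − I`. For `h = g − x' sym(x'ᵀg)` with `x'ᵀx' = I`,
`x'ᵀh = skew(x'ᵀg)`, and skew-symmetric matrices are Frobenius-orthogonal to symmetric ones. -/

theorem finner_mul_right {m n k : Type*} [Fintype m] [Fintype n] [Fintype k]
    (A : Matrix m k ℝ) (Y : Matrix m n ℝ) (B : Matrix n k ℝ) :
    finner A (Y * B) = finner (Yᵀ * A) B := by
  rw [finner, finner, transpose_mul, ← Matrix.mul_assoc, trace_mul_comm, Matrix.mul_assoc]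

theorem sub_msym {m : Type*} [Fintype m] (A : Matrix m m ℝ) : A - msym A = mskew A := by
  rw [msym, mskew]
  module

theorem finner_mskew_eq_zero_of_isSymm {m : Type*} [Fintype m] (A : Matrix m m ℝ)
    {S : Matrix m m ℝ} (hS : S.IsSymm) : finner (mskew A) S = 0 := by
  have htr : trace (Aᵀ * S) = trace (A * S) := by
    rw [← trace_transpose, transpose_mul, transpose_transpose, hS.eq, trace_mul_comm]
  rw [finner, hS.eq, mskew, smul_mul, Matrix.sub_mul, trace_smul, trace_sub, htr, sub_self,
    smul_zero]

theorem transpose_mul_sub_mul_msym {m n : Type*} [Fintype m] [Fintype n] [DecidableEq n]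
    {x' : Matrix m n ℝ} (hx' : x'ᵀ * x' = 1) (g : Matrix m n ℝ) :
    x'ᵀ * (g - x' * msym (x'ᵀ * g)) = mskew (x'ᵀ * g) := by
  rw [Matrix.mul_sub, ← Matrix.mul_assoc, hx', Matrix.one_mul, sub_msym]

/-- Let `x` have full column rank with polar factor `x' = Proj_St(x)`
(i.e. `x' = U Vᵀ` for a thin SVD `x = U S Vᵀ`). Then for every matrix `g`,
`⟨g − x'·sym(x'ᵀ g), x − x'⟩ = 0`. In particular, for any `f` differentiable at `x'` with
Euclidean gradient `Df`, `⟨∇𝓛(x'), x − x'⟩ = 0` where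
`∇𝓛(x') = ∇f(x') − x'·sym(x'ᵀ∇f(x'))`. -/
theorem meritGrad_orthogonal_to_normal_error {d r : ℕ}
    (x x' : Matrix (Fin d) (Fin r) ℝ) (hpf : IsPolarFactor x x') :
    (∀ g : Matrix (Fin d) (Fin r) ℝ, finner (g - x' * msym (x'ᵀ * g)) (x - x') = 0) ∧
      (∀ Df : Matrix (Fin d) (Fin r) ℝ → Matrix (Fin d) (Fin r) ℝ,
        finner (meritGradSt Df x') (x - x') = 0) := by
  obtain ⟨hx', P, hP, rfl⟩ := hpf
  have herror : x' * P - x' = x' * (P - 1) := by rw [Matrix.mul_sub, Matrix.mul_one]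
  have hsymm : (P - 1).IsSymm := (isHermitian_iff_isSymm.mp hP.isHermitian).sub isSymm_one
  have key : ∀ g : Matrix (Fin d) (Fin r) ℝ,
      finner (g - x' * msym (x'ᵀ * g)) (x' * P - x') = 0 := fun g => by
    rw [herror, finner_mul_right, transpose_mul_sub_mul_msym hx',
      finner_mskew_eq_zero_of_isSymm _ hsymm]
  exact ⟨key, fun Df => key (Df x')⟩

end DRFGT
end
end

section
/- Let x ∈ ℝ^{d×r} have full column rank and let x' = Proj_St(x) be its projection onto the Stiefel manifold (the polar factor). Then ‖x − x'‖_F ≤ ‖xᵀx − I_r‖_F. -/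
open Matrix BigOperators Finset

noncomputable section

namespace DRFGT

/-! The polar decomposition `x = x' P` reduces everything to the symmetric factor `P ⪰ 0`:
since `x'` has orthonormal columns, `‖x − x'‖_F = ‖P − 1‖_F`, while `xᵀx − 1 = P² − 1`.
Since `P − 1` and `P + 1` commute,
`(P² − 1)² − (P − 1)² = (P − 1)((P + 1)² − 1)(P − 1) = (P − 1)(P² + 2P)(P − 1)`,
which is positive semidefinite and hence has nonnegative trace. -/

section
variable {m n k : Type*} [Fintype m] [Fintype n] [Fintype k]

lemma fnorm_mul_left_of_transpose_mul_self_eq_one [DecidableEq n] {U : Matrix m n ℝ}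
    (hU : Uᵀ * U = 1) (A : Matrix n k ℝ) : fnorm (U * A) = fnorm A := by
  have : finner (U * A) (U * A) = finner A A := by
    rw [finner, finner, transpose_mul, ← Matrix.mul_assoc, trace_mul_comm, ← Matrix.mul_assoc,
      ← Matrix.mul_assoc, hU, Matrix.one_mul, trace_mul_comm]
  rw [fnorm, fnorm, this]

lemma finner_self_eq_trace_mul_self {A : Matrix n n ℝ} (hA : Aᵀ = A) :
    finner A A = (A * A).trace := by
  rw [finner, hA]

lemma fnorm_sub_one_le_fnorm_mul_self_sub_one [DecidableEq n] {P : Matrix n n ℝ}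
    (hP : P.PosSemidef) :
    fnorm (P - 1) ≤ fnorm (P * P - 1) := by
  have hPt : Pᵀ = P := hP.isHermitian
  have hQt : (P - 1)ᵀ = P - 1 := by rw [transpose_sub, hPt, transpose_one]
  have hQQt : (P * P - 1)ᵀ = P * P - 1 := by
    rw [transpose_sub, transpose_mul, hPt, transpose_one]
  have hdiff : (P * P - 1) * (P * P - 1) - (P - 1) * (P - 1)
      = (P - 1) * (P * P + P + P) * (P - 1) := by
    noncomm_ring
  have hPP : (P * P).PosSemidef := by
    simpa only [conjTranspose_eq_transpose_of_trivial, hPt] using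
      posSemidef_conjTranspose_mul_self P
  have hpsd : ((P - 1) * (P * P + P + P) * (P - 1)).PosSemidef := by
    have := ((hPP.add hP).add hP).mul_mul_conjTranspose_same (P - 1)
    rwa [conjTranspose_eq_transpose_of_trivial, hQt] at this
  have htr := hpsd.trace_nonneg
  rw [← hdiff, trace_sub] at htr
  rw [fnorm, fnorm, finner_self_eq_trace_mul_self hQt, finner_self_eq_trace_mul_self hQQt]
  exact Real.sqrt_le_sqrt (by linarith)

end

/-- For `x` of full column rank with projection `x' = Proj_St(x)` onto the
Stiefel manifold (the polar factor), `‖x − x'‖_F ≤ ‖xᵀx − I_r‖_F`. -/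
theorem dist_to_polar_le {d r : ℕ}
    (x x' : Matrix (Fin d) (Fin r) ℝ) (hpf : IsPolarFactor x x') :
    fnorm (x - x') ≤ fnorm (xᵀ * x - 1) := by
  obtain ⟨hx', P, hP, rfl⟩ := hpf
  have hPt : Pᵀ = P := hP.isHermitian
  have hgram : (x' * P)ᵀ * (x' * P) = P * P := by
    rw [transpose_mul, Matrix.mul_assoc, ← Matrix.mul_assoc x'ᵀ, hx', Matrix.one_mul, hPt]
  calc fnorm (x' * P - x') = fnorm (P - 1) := by
        rw [← fnorm_mul_left_of_transpose_mul_self_eq_one hx' (P - 1), Matrix.mul_sub,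
          Matrix.mul_one]
    _ ≤ fnorm (P * P - 1) := fnorm_sub_one_le_fnorm_mul_self_sub_one hP.posSemidef
    _ = fnorm ((x' * P)ᵀ * (x' * P) - 1) := by rw [hgram]

end DRFGT
end
end

section
/- Let x ∈ St(d,r) (i.e., xᵀx = I_r) and g ∈ ℝ^{d×r}. Then ‖g − x·sym(xᵀg)‖_F ≤ 2‖skew(g xᵀ)x‖_F. In particular, for any differentiable f : ℝ^{d×r} → ℝ and x ∈ St(d,r), ‖∇𝓛(x)‖_F ≤ 2‖Λ(x)‖_F, since on St(d,r) one has ∇𝓛(x) = ∇f(x) − x·sym(xᵀ∇f(x)) and Λ(x) = grad f(x) = skew(∇f(x)xᵀ)x. -/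
open Matrix BigOperators Finset

noncomputable section

namespace DRFGT

lemma key_eq {d r : ℕ} (x : Matrix (Fin d) (Fin r) ℝ) (hx : xᵀ * x = 1)
    (g : Matrix (Fin d) (Fin r) ℝ) :
    g - x * msym (xᵀ * g) = (2:ℝ) • (mskew (g * xᵀ) * x) - x * (xᵀ * (mskew (g * xᵀ) * x)) := by
  have h2' : xᵀ * (x * (gᵀ * x)) = gᵀ * x := by rw [← Matrix.mul_assoc, hx, Matrix.one_mul]
  simp only [mskew, msym, Matrix.smul_mul, Matrix.mul_smul, Matrix.sub_mul, Matrix.mul_sub,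
    Matrix.mul_add, Matrix.transpose_mul, Matrix.transpose_transpose, smul_sub, smul_add,
    Matrix.mul_assoc, hx, Matrix.mul_one, h2']
  module

lemma finner_expand {d r : ℕ} (x : Matrix (Fin d) (Fin r) ℝ) (hx : xᵀ * x = 1)
    (A : Matrix (Fin d) (Fin r) ℝ) :
    finner ((2:ℝ) • A - x * (xᵀ * A)) ((2:ℝ) • A - x * (xᵀ * A))
      = 4 * finner A A - 3 * finner (xᵀ * A) (xᵀ * A) := by
  have h1 : finner A (x * (xᵀ * A)) = finner (xᵀ * A) (xᵀ * A) := by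
    simp only [finner, Matrix.transpose_mul, Matrix.transpose_transpose]
    rw [← Matrix.mul_assoc, Matrix.trace_mul_cycle, ← Matrix.mul_assoc]
  have h2 : finner (x * (xᵀ * A)) (x * (xᵀ * A)) = finner (xᵀ * A) (xᵀ * A) := by
    simp only [finner, Matrix.transpose_mul, Matrix.transpose_transpose]
    rw [Matrix.trace_mul_cycle, ← Matrix.mul_assoc, ← Matrix.mul_assoc,
      Matrix.mul_assoc (Aᵀ * x) xᵀ x, hx, Matrix.mul_one, ← Matrix.trace_mul_cycle,
      ← Matrix.mul_assoc]
  have h3 : finner (x * (xᵀ * A)) A = finner (xᵀ * A) (xᵀ * A) := by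
    rw [finner_comm]; exact h1
  simp only [finner, Matrix.sub_mul, Matrix.mul_sub, Matrix.transpose_sub, Matrix.smul_mul,
    Matrix.mul_smul, Matrix.transpose_smul, Matrix.trace_sub, Matrix.trace_smul, smul_eq_mul]
  have e1 := h1; have e2 := h2; have e3 := h3
  simp only [finner] at e1 e2 e3
  rw [e1, e2, e3]; ring

lemma main_ineq {d r : ℕ} (x : Matrix (Fin d) (Fin r) ℝ) (hx : xᵀ * x = 1)
    (g : Matrix (Fin d) (Fin r) ℝ) :
    fnorm (g - x * msym (xᵀ * g)) ≤ 2 * fnorm (mskew (g * xᵀ) * x) := by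
  set A := mskew (g * xᵀ) * x with hA
  rw [fnorm, fnorm, key_eq x hx g, ← hA]
  have h := finner_expand x hx A
  have hle : finner ((2:ℝ) • A - x * (xᵀ * A)) ((2:ℝ) • A - x * (xᵀ * A)) ≤ 4 * finner A A := by
    rw [h]
    nlinarith [finner_self_nonneg (xᵀ * A)]
  calc Real.sqrt (finner ((2:ℝ) • A - x * (xᵀ * A)) ((2:ℝ) • A - x * (xᵀ * A)))
      ≤ Real.sqrt (4 * finner A A) := Real.sqrt_le_sqrt hle
    _ = 2 * Real.sqrt (finner A A) := by
        rw [show (4:ℝ) = 2^2 by norm_num, Real.sqrt_mul (by positivity), Real.sqrt_sq (by norm_num)]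

/-- For `x ∈ St(d,r)` and any `g`,
`‖g − x·sym(xᵀg)‖_F ≤ 2‖skew(g xᵀ)x‖_F`. In particular, for any differentiable `f` with
Euclidean gradient `Df`, `‖∇𝓛(x)‖_F ≤ 2‖Λ(x)‖_F` on `St(d,r)`, where on the manifold
`∇𝓛(x) = ∇f(x) − x·sym(xᵀ∇f(x))` and `Λ(x) = grad f(x) = skew(∇f(x)xᵀ)x`. -/
theorem meritGrad_le_two_landing {d r : ℕ}
    (x : Matrix (Fin d) (Fin r) ℝ) (hx : x ∈ St d r) :
    (∀ g : Matrix (Fin d) (Fin r) ℝ,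
      fnorm (g - x * msym (xᵀ * g)) ≤ 2 * fnorm (mskew (g * xᵀ) * x)) ∧
      (∀ Df : Matrix (Fin d) (Fin r) ℝ → Matrix (Fin d) (Fin r) ℝ,
        fnorm (meritGradSt Df x) ≤ 2 * fnorm (rgrad Df x)) := by
  refine ⟨fun g => main_ineq x hx g, fun Df => ?_⟩
  exact main_ineq x hx (Df x)

end DRFGT
end
end

section
/- Let ε ∈ (0, 3/4) and let f : ℝ^{d×r} → ℝ be differentiable with ‖∇f(u) − ∇f(v)‖_F ≤ L̂‖u − v‖_F for all u, v ∈ ℝ^{d×r} and ‖∇f(u)‖_F ≤ L̂ for all u ∈ St(d,r)^ε. Then for every x ∈ St(d,r)^ε with x' = Proj_St(x), the relative gradient satisfies ‖grad f(x) − grad f(x')‖_F ≤ (3 + 2ε) L̂ ‖x − x'‖_F. -/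
/-!
With `S(x) = skew(∇f(x) xᵀ)` one has
`grad f(x) - grad f(x') = S(x) (x - x') + (S(x) - S(x')) x'`.
Right multiplication by `xᵀ` enlarges Frobenius norms by at most `√(1 + ε)`, because
`‖x v‖² = vᵀ (xᵀ x) v ≤ (1 + ε) ‖v‖²` row by row, and right multiplication by `x'` does not
enlarge them (Bessel's inequality for the orthonormal columns of `x'`). Hence
`‖S(x)‖ ≤ √(1 + ε) L̂` and `‖S(x) - S(x')‖ ≤ (√(1 + ε) + 1) L̂ ‖x - x'‖`, and the constant
`1 + 2 √(1 + ε)` is at most `3 + 2 ε`.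
-/

open Matrix BigOperators Finset

noncomputable section

namespace DRFGT

lemma mskew_sub {m : Type*} [Fintype m] (A B : Matrix m m ℝ) :
    mskew (A - B) = mskew A - mskew B := by
  simp only [mskew, Matrix.transpose_sub]
  module

lemma mskew_add {m : Type*} [Fintype m] (A B : Matrix m m ℝ) :
    mskew (A + B) = mskew A + mskew B := by
  simp only [mskew, Matrix.transpose_add]
  module

lemma dotProduct_self_nonneg {R n : Type*} [Fintype n] [CommRing R] [LinearOrder R]
    [IsStrictOrderedRing R] (v : n → R) : 0 ≤ v ⬝ᵥ v :=
  Finset.sum_nonneg fun i _ => mul_self_nonneg (v i)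

lemma mulVec_dotProduct_mulVec {R m n : Type*} [Fintype m] [Fintype n] [CommSemiring R]
    (x : Matrix m n R) (v w : n → R) : (x *ᵥ v) ⬝ᵥ (x *ᵥ w) = ((xᵀ * x) *ᵥ v) ⬝ᵥ w := by
  rw [Matrix.dotProduct_mulVec, ← Matrix.mulVec_transpose, Matrix.mulVec_mulVec]

section Frobenius

attribute [local instance] Matrix.frobeniusNormedAddCommGroup Matrix.frobeniusNormedSpace

variable {m n p : Type*} [Fintype m] [Fintype n] [Fintype p]

lemma frobenius_norm_sq_eq_sum_dotProduct (A : Matrix m n ℝ) :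
    ‖A‖ ^ 2 = ∑ i, A i ⬝ᵥ A i := by
  change ‖WithLp.toLp 2 fun i => WithLp.toLp 2 fun j => A i j‖ ^ 2 = _
  rw [PiLp.norm_sq_eq_of_L2]
  refine Finset.sum_congr rfl fun i _ => ?_
  rw [PiLp.norm_sq_eq_of_L2]
  simp [dotProduct, sq]

lemma fnorm_eq_norm (A : Matrix m n ℝ) : fnorm A = ‖A‖ := by
  rw [fnorm, finner, ← Real.sqrt_sq (norm_nonneg A), frobenius_norm_sq_eq_sum_dotProduct]
  simp [Matrix.trace, Matrix.mul_apply, dotProduct]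

lemma frobenius_norm_mul_le_of_vecMul {B : Matrix n p ℝ} {c : ℝ} (hc : 0 ≤ c)
    (hB : ∀ v, (v ᵥ* B) ⬝ᵥ (v ᵥ* B) ≤ c ^ 2 * (v ⬝ᵥ v)) (A : Matrix m n ℝ) :
    ‖A * B‖ ≤ c * ‖A‖ := by
  refine le_of_sq_le_sq ?_ (by positivity)
  calc ‖A * B‖ ^ 2 = ∑ i, (A i ᵥ* B) ⬝ᵥ (A i ᵥ* B) := by
        simp only [frobenius_norm_sq_eq_sum_dotProduct, Matrix.mul_apply_eq_vecMul]
    _ ≤ ∑ i, c ^ 2 * (A i ⬝ᵥ A i) := Finset.sum_le_sum fun i _ => hB (A i)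
    _ = (c * ‖A‖) ^ 2 := by rw [mul_pow, frobenius_norm_sq_eq_sum_dotProduct, Finset.mul_sum]

lemma dotProduct_mulVec_le (M : Matrix n n ℝ) (v : n → ℝ) :
    v ⬝ᵥ (M *ᵥ v) ≤ ‖M‖ * (v ⬝ᵥ v) := by
  have hv : ‖WithLp.toLp 2 v‖ ^ 2 = v ⬝ᵥ v := by
    rw [← Matrix.frobenius_norm_replicateCol (ι := Unit), frobenius_norm_sq_eq_sum_dotProduct]
    simp [dotProduct]
  calc v ⬝ᵥ (M *ᵥ v) = inner ℝ (WithLp.toLp 2 v) (WithLp.toLp 2 (M *ᵥ v)) := by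
        simp [EuclideanSpace.inner_eq_star_dotProduct, dotProduct_comm]
    _ ≤ ‖WithLp.toLp 2 v‖ * ‖WithLp.toLp 2 (M *ᵥ v)‖ := real_inner_le_norm _ _
    _ ≤ ‖WithLp.toLp 2 v‖ * (‖M‖ * ‖WithLp.toLp 2 v‖) := by
        gcongr
        rw [← Matrix.frobenius_norm_replicateCol (ι := Unit),
          ← Matrix.frobenius_norm_replicateCol (ι := Unit), Matrix.replicateCol_mulVec]
        exact Matrix.frobenius_norm_mul _ _
    _ = ‖M‖ * (v ⬝ᵥ v) := by rw [← hv]; ring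

variable [DecidableEq n]

lemma mulVec_dotProduct_mulVec_self_le {x : Matrix m n ℝ} {ε : ℝ} (hx : ‖xᵀ * x - 1‖ ≤ ε)
    (v : n → ℝ) : (x *ᵥ v) ⬝ᵥ (x *ᵥ v) ≤ (1 + ε) * (v ⬝ᵥ v) := by
  have hdev := dotProduct_mulVec_le (xᵀ * x - 1) v
  rw [Matrix.sub_mulVec, Matrix.one_mulVec, dotProduct_sub, dotProduct_comm] at hdev
  rw [mulVec_dotProduct_mulVec]
  nlinarith [dotProduct_self_nonneg v]

lemma frobenius_norm_mul_transpose_le {x : Matrix m n ℝ} {ε : ℝ} (hx : ‖xᵀ * x - 1‖ ≤ ε)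
    (A : Matrix p n ℝ) : ‖A * xᵀ‖ ≤ √(1 + ε) * ‖A‖ := by
  have hε : 0 ≤ 1 + ε := by linarith [norm_nonneg (xᵀ * x - 1)]
  refine frobenius_norm_mul_le_of_vecMul (Real.sqrt_nonneg _) (fun v => ?_) A
  rw [Matrix.vecMul_transpose, Real.sq_sqrt hε]
  exact mulVec_dotProduct_mulVec_self_le hx v

lemma vecMul_dotProduct_vecMul_self_le {y : Matrix m n ℝ} (hy : yᵀ * y = 1) (v : m → ℝ) :
    (v ᵥ* y) ⬝ᵥ (v ᵥ* y) ≤ v ⬝ᵥ v := by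
  set w := v ᵥ* y
  have hvw : v ⬝ᵥ (y *ᵥ w) = w ⬝ᵥ w := Matrix.dotProduct_mulVec v y w
  have hww : (y *ᵥ w) ⬝ᵥ (y *ᵥ w) = w ⬝ᵥ w := by
    rw [mulVec_dotProduct_mulVec, hy, Matrix.one_mulVec]
  have hpyth : (v - y *ᵥ w) ⬝ᵥ (v - y *ᵥ w) = v ⬝ᵥ v - w ⬝ᵥ w := by
    rw [sub_dotProduct, dotProduct_sub, dotProduct_sub, dotProduct_comm (y *ᵥ w) v, hvw, hww]
    ring
  linarith [dotProduct_self_nonneg (v - y *ᵥ w)]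

lemma frobenius_norm_mul_le_of_transpose_mul_self_eq_one {y : Matrix m n ℝ} (hy : yᵀ * y = 1)
    (A : Matrix p m ℝ) : ‖A * y‖ ≤ ‖A‖ := by
  refine (frobenius_norm_mul_le_of_vecMul zero_le_one (fun v => ?_) A).trans_eq (one_mul _)
  rw [one_pow, one_mul]
  exact vecMul_dotProduct_vecMul_self_le hy v

lemma frobenius_norm_mskew_le (A : Matrix m m ℝ) : ‖mskew A‖ ≤ ‖A‖ := by
  rw [mskew, norm_smul, Real.norm_of_nonneg (by norm_num)]
  linarith [norm_sub_le A Aᵀ, Matrix.frobenius_norm_transpose A]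

/-- Let `ε ∈ (0, 3/4)` and let `f` be differentiable with `L̂`-Lipschitz
Euclidean gradient `Df = ∇f`, and `‖∇f(u)‖_F ≤ L̂` for all `u ∈ St(d,r)^ε`. Then for every
`x ∈ St(d,r)^ε` with `x' = Proj_St(x)`,
`‖grad f(x) − grad f(x')‖_F ≤ (3 + 2ε) L̂ ‖x − x'‖_F`. -/
theorem rgrad_lipschitz_to_polar {d r : ℕ} (ε Lhat : ℝ)
    (hε : ε ∈ Set.Ioo (0 : ℝ) (3 / 4))
    (Df : Matrix (Fin d) (Fin r) ℝ → Matrix (Fin d) (Fin r) ℝ)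
    (hLip : ∀ u v : Matrix (Fin d) (Fin r) ℝ, fnorm (Df u - Df v) ≤ Lhat * fnorm (u - v))
    (hBnd : ∀ u ∈ StEps d r ε, fnorm (Df u) ≤ Lhat)
    (x x' : Matrix (Fin d) (Fin r) ℝ) (hx : x ∈ StEps d r ε) (hpf : IsPolarFactor x x') :
    fnorm (rgrad Df x - rgrad Df x') ≤ (3 + 2 * ε) * Lhat * fnorm (x - x') := by
  have hx' : x' ∈ StEps d r ε := by
    simp [StEps, hpf.1, fnorm_eq_norm, hε.1.le]
  have hxε : ‖xᵀ * x - 1‖ ≤ ε := by rwa [← fnorm_eq_norm]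
  simp only [fnorm_eq_norm] at hLip hBnd ⊢
  have hL : 0 ≤ Lhat := (norm_nonneg _).trans (hBnd x' hx')
  set S := mskew (Df x * xᵀ)
  set S' := mskew (Df x' * x'ᵀ)
  have hS : ‖S‖ ≤ √(1 + ε) * Lhat :=
    calc ‖S‖ ≤ √(1 + ε) * ‖Df x‖ :=
          (frobenius_norm_mskew_le _).trans (frobenius_norm_mul_transpose_le hxε _)
      _ ≤ √(1 + ε) * Lhat := by gcongr; exact hBnd x hx
  have hSS' : ‖S - S'‖ ≤ √(1 + ε) * (Lhat * ‖x - x'‖) + Lhat * ‖x - x'‖ := by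
    have hsplit : Df x * xᵀ - Df x' * x'ᵀ = (Df x - Df x') * xᵀ + Df x' * (x - x')ᵀ := by
      simp only [Matrix.sub_mul, Matrix.mul_sub, Matrix.transpose_sub]; abel
    rw [← mskew_sub, hsplit, mskew_add]
    refine norm_add_le_of_le ((frobenius_norm_mskew_le _).trans ?_)
      ((frobenius_norm_mskew_le _).trans ?_)
    · exact (frobenius_norm_mul_transpose_le hxε _).trans (by gcongr; exact hLip x x')
    · refine (Matrix.frobenius_norm_mul _ _).trans ?_
      rw [Matrix.frobenius_norm_transpose]
      gcongr
      exact hBnd x' hx'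
  have hsqrt : √(1 + ε) ≤ 1 + ε := Real.sqrt_le_self_iff.mpr (Or.inr (by linarith [hε.1]))
  calc ‖rgrad Df x - rgrad Df x'‖ = ‖S * (x - x') + (S - S') * x'‖ := by
        congr 1
        simp only [rgrad, S, S', Matrix.mul_sub, Matrix.sub_mul]
        abel
    _ ≤ ‖S‖ * ‖x - x'‖ + ‖S - S'‖ := norm_add_le_of_le (Matrix.frobenius_norm_mul _ _)
        (frobenius_norm_mul_le_of_transpose_mul_self_eq_one hpf.1 _)
    _ ≤ (3 + 2 * ε) * Lhat * ‖x - x'‖ := by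
        have hD := norm_nonneg (x - x')
        nlinarith [mul_le_mul_of_nonneg_right hS hD, mul_nonneg hL hD]

end Frobenius

end DRFGT
end
end

section
/- Let W ∈ ℝ^{n×n} be symmetric doubly stochastic with second-largest singular value σ_W < 1, and let α > 0. Suppose x_{i,k} = Σ_j W_{ij} x_{j,k−1} − α y_{i,k−1} for matrices x_{i,k−1}, y_{i,k−1} ∈ ℝ^{d×r}, i ∈ [n]. Then the consensus error satisfies ‖𝐱_k − 𝐱̄_k‖_F² ≤ ((1+σ_W²)/2)‖𝐱_{k−1} − 𝐱̄_{k−1}‖_F² + ((1+σ_W²)/(1−σ_W²)) α² ‖𝐲_{k−1} − 𝐲̄_{k−1}‖_F². -/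
open Matrix BigOperators Finset

noncomputable section

namespace DRFGT

section Aux

variable {m k : Type*} [Fintype m] [Fintype k]

lemma finner_self (A : Matrix m k ℝ) : finner A A = ∑ p, ∑ q, A p q ^ 2 := by
  simp [finner, Matrix.trace, Matrix.mul_apply, Matrix.diag, sq]

lemma fnorm_nonneg (A : Matrix m k ℝ) : 0 ≤ fnorm A := Real.sqrt_nonneg _

lemma fnorm_sq (A : Matrix m k ℝ) : fnorm A ^ 2 = ∑ p, ∑ q, A p q ^ 2 := by
  rw [fnorm, Real.sq_sqrt, finner_self]
  rw [finner_self]; positivity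

lemma l2_triangle {ι : Type*} [Fintype ι] (f g : ι → ℝ) :
    Real.sqrt (∑ i, (f i + g i) ^ 2) ≤
      Real.sqrt (∑ i, f i ^ 2) + Real.sqrt (∑ i, g i ^ 2) := by
  have h := norm_add_le ((EuclideanSpace.equiv ι ℝ).symm f) ((EuclideanSpace.equiv ι ℝ).symm g)
  simpa [EuclideanSpace.norm_eq, Real.norm_eq_abs, sq_abs] using h

lemma fnorm_eq (A : Matrix m k ℝ) :
    fnorm A = Real.sqrt (∑ p : m × k, A p.1 p.2 ^ 2) := by
  simp [fnorm, finner_self, Fintype.sum_prod_type]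

lemma fnorm_add_le (A B : Matrix m k ℝ) : fnorm (A + B) ≤ fnorm A + fnorm B := by
  rw [fnorm_eq, fnorm_eq, fnorm_eq]
  simpa [Matrix.add_apply] using
    l2_triangle (fun p : m × k => A p.1 p.2) (fun p : m × k => B p.1 p.2)

lemma snorm_nonneg {n d r : ℕ} (z : Fin n → Matrix (Fin d) (Fin r) ℝ) : 0 ≤ snorm z :=
  Real.sqrt_nonneg _

lemma snorm_add_le {n d r : ℕ} (a b : Fin n → Matrix (Fin d) (Fin r) ℝ) :
    snorm (fun i => a i + b i) ≤ snorm a + snorm b := by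
  unfold snorm
  calc Real.sqrt (∑ i, fnorm (a i + b i) ^ 2)
      ≤ Real.sqrt (∑ i, (fnorm (a i) + fnorm (b i)) ^ 2) := by
        apply Real.sqrt_le_sqrt
        apply Finset.sum_le_sum
        intro i _
        exact pow_le_pow_left₀ (fnorm_nonneg _) (fnorm_add_le _ _) 2
    _ ≤ _ := l2_triangle _ _

lemma snorm_smul {n d r : ℕ} (c : ℝ) (z : Fin n → Matrix (Fin d) (Fin r) ℝ) :
    snorm (fun i => c • z i) = |c| * snorm z := by
  unfold snorm
  have h : ∀ i, fnorm (c • z i) ^ 2 = c ^ 2 * fnorm (z i) ^ 2 := by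
    intro i
    rw [fnorm_sq, fnorm_sq, Finset.mul_sum]
    congr 1; ext p
    rw [Finset.mul_sum]
    congr 1; ext q
    simp [Matrix.smul_apply, mul_pow]
  simp only [h, ← Finset.mul_sum]
  rw [Real.sqrt_mul (sq_nonneg c), Real.sqrt_sq_eq_abs]

lemma avg_sub {n d r : ℕ} (f g : Fin n → Matrix (Fin d) (Fin r) ℝ) :
    avg (fun i => f i - g i) = avg f - avg g := by
  unfold avg
  rw [Finset.sum_sub_distrib, smul_sub]

lemma avg_smul {n d r : ℕ} (c : ℝ) (f : Fin n → Matrix (Fin d) (Fin r) ℝ) :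
    avg (fun i => c • f i) = c • avg f := by
  unfold avg
  rw [← Finset.smul_sum, smul_comm]

lemma key_scalar (σ α A B X L : ℝ) (hσ0 : 0 ≤ σ) (hσ1 : σ < 1) (hα : 0 < α)
    (hA0 : 0 ≤ A) (hB : 0 ≤ B) (hX : 0 ≤ X) (hL : 0 ≤ L)
    (hA : A ≤ σ * X) (hL2 : L ≤ A + α * B) :
    L ^ 2 ≤ (1 + σ ^ 2) / 2 * X ^ 2 + (1 + σ ^ 2) / (1 - σ ^ 2) * α ^ 2 * B ^ 2 := by
  have h1 : 0 < 1 - σ ^ 2 := by nlinarith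
  have step1 : L ^ 2 ≤ (σ * X + α * B) ^ 2 := by
    have h2 : L ≤ σ * X + α * B := by nlinarith
    have h3 : 0 ≤ σ * X + α * B := by positivity
    nlinarith
  have hrw : (1 + σ ^ 2) / 2 * X ^ 2 + (1 + σ ^ 2) / (1 - σ ^ 2) * α ^ 2 * B ^ 2
      - (σ * X + α * B) ^ 2
      = ((1 - σ ^ 2) * X - 2 * σ * α * B) ^ 2 / (2 * (1 - σ ^ 2)) := by
    field_simp
    ring
  have h4 : 0 ≤ ((1 - σ ^ 2) * X - 2 * σ * α * B) ^ 2 / (2 * (1 - σ ^ 2)) := by positivity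
  linarith

end Aux

/-- consensus error on `𝐱`. For a symmetric doubly stochastic `W` with
averaging contraction factor `σ_W < 1` and the update `x_{i,k} = Σⱼ W_{ij} x_{j,k−1} − α y_{i,k−1}`,
`‖𝐱_k − 𝐱̄_k‖² ≤ ((1+σ_W²)/2)‖𝐱_{k−1} − 𝐱̄_{k−1}‖² + ((1+σ_W²)/(1−σ_W²))α²‖𝐲_{k−1} − 𝐲̄_{k−1}‖²`. -/
theorem consensus_error_x {n d r : ℕ} (σW α : ℝ)
    (hσ0 : 0 ≤ σW) (hσ1 : σW < 1) (hα : 0 < α)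
    (W : Matrix (Fin n) (Fin n) ℝ)
    (hWsym : Wᵀ = W) (hWnn : ∀ i j, 0 ≤ W i j) (hWrow : ∀ i, ∑ j, W i j = 1)
    (hWcontract : ∀ z : Fin n → Matrix (Fin d) (Fin r) ℝ,
      snorm (fun i => (∑ j, W i j • z j) - avg z) ≤ σW * snorm (fun i => z i - avg z))
    (xp yp xc : Fin n → Matrix (Fin d) (Fin r) ℝ)
    (hxc : ∀ i, xc i = (∑ j, W i j • xp j) - α • yp i) :
    snorm (fun i => xc i - avg xc) ^ 2 ≤
      (1 + σW ^ 2) / 2 * snorm (fun i => xp i - avg xp) ^ 2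
        + (1 + σW ^ 2) / (1 - σW ^ 2) * α ^ 2 * snorm (fun i => yp i - avg yp) ^ 2 := by
  set Wx : Fin n → Matrix (Fin d) (Fin r) ℝ := fun i => ∑ j, W i j • xp j with hWx
  have hWcol : ∀ j, ∑ i, W i j = 1 := by
    intro j
    have : ∀ i, W i j = W j i := by
      intro i
      conv_lhs => rw [← hWsym]
      rfl
    simp only [this]
    exact hWrow j
  have havgW : avg Wx = avg xp := by
    unfold avg
    congr 1
    rw [Finset.sum_comm]
    calc ∑ j, ∑ i, W i j • xp j = ∑ j, (∑ i, W i j) • xp j := by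
          congr 1; ext j; rw [Finset.sum_smul]
      _ = ∑ j, xp j := by simp [hWcol]
  have havgxc : avg xc = avg xp - α • avg yp := by
    have hxceq : xc = fun i => Wx i - α • yp i := funext hxc
    rw [hxceq, avg_sub Wx (fun i => α • yp i), avg_smul, havgW]
  have hdecomp : (fun i => xc i - avg xc)
      = fun i => (Wx i - avg xp) + (-α) • (yp i - avg yp) := by
    funext i
    rw [hxc, havgxc]
    simp only [smul_sub, neg_smul]
    abel
  set A := snorm (fun i => Wx i - avg xp) with hAdef
  set B := snorm (fun i => yp i - avg yp) with hBdef
  set X := snorm (fun i => xp i - avg xp) with hXdef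
  set L := snorm (fun i => xc i - avg xc) with hLdef
  have htri : L ≤ A + α * B := by
    rw [hLdef, hdecomp]
    have h := snorm_add_le (fun i => Wx i - avg xp) (fun i => (-α) • (yp i - avg yp))
    rw [snorm_smul, abs_neg, abs_of_pos hα] at h
    exact h
  have hA : A ≤ σW * X := hWcontract xp
  exact key_scalar σW α A B X L hσ0 hσ1 hα (snorm_nonneg _) (snorm_nonneg _)
    (snorm_nonneg _) (snorm_nonneg _) hA htri

end DRFGT
end
end

section
/- (Stability of the consensus-error LTI system.) Let 0 ≤ σ_W < 1, L' > 0, Θ = (1+σ_W²)/(1−σ_W²), and define the 2×2 nonnegative matrix G̃ = [[(1+σ_W²)/2 + 4L'²α²Θ, 8Θ], [α²L'²Θ, (1+σ_W²)/2]]. If 0 < α < (1−σ_W²)² / (16L'(1+σ_W²)), then the spectral radius of G̃ is strictly less than 1. -/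
/-! For a real 2×2 matrix, the Schur–Cohn conditions `det < 1` and `|tr| < 1 + det` put both roots
of the characteristic polynomial `μ² − tr·μ + det` in the open unit disc. For a nonnegative matrix
`[[a, b], [c, d]]` they follow from `a, d < 1` and `bc < (1 − a)(1 − d)`. For `G̃` the step-size bound
says exactly `16·L'αΘ < 1 − σ_W²`; since `bc = 8(L'αΘ)²` and `a − (1 + σ_W²)/2 ≤ 4(L'αΘ)²`, both
are `O((1 − σ_W²)²)`, small against `(1 − a)(1 − d) ≈ (1 − σ_W²)²/4`. -/

open Matrix BigOperators Finset

noncomputable section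

namespace DRFGT

/-- The transition matrix `G̃` of the consensus-error LTI system, with
`Θ = (1+σ_W²)/(1−σ_W²)`. -/
def Gtilde (σW L' α : ℝ) : Matrix (Fin 2) (Fin 2) ℝ :=
  !![(1 + σW ^ 2) / 2 + 4 * L' ^ 2 * α ^ 2 * ((1 + σW ^ 2) / (1 - σW ^ 2)),
       8 * ((1 + σW ^ 2) / (1 - σW ^ 2));
     α ^ 2 * L' ^ 2 * ((1 + σW ^ 2) / (1 - σW ^ 2)),
       (1 + σW ^ 2) / 2]

end DRFGT

theorem Complex.norm_lt_one_of_sq_sub_mul_add_eq_zero {t d : ℝ} {μ : ℂ}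
    (hμ : μ ^ 2 - t * μ + d = 0) (hd : d < 1) (ht : |t| < 1 + d) : ‖μ‖ < 1 := by
  obtain ⟨ht₁, ht₂⟩ := abs_lt.mp ht
  have hre : μ.re ^ 2 - μ.im ^ 2 - t * μ.re + d = 0 := by
    simpa [pow_two] using congrArg Complex.re hμ
  have him : μ.im * (2 * μ.re - t) = 0 := by
    have := congrArg Complex.im hμ
    simp only [pow_two, Complex.add_im, Complex.sub_im, Complex.mul_im, Complex.ofReal_re,
      Complex.ofReal_im, Complex.zero_im] at this
    linear_combination this
  suffices Complex.normSq μ < 1 by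
    rwa [← Complex.sq_norm, sq_lt_one_iff₀ (norm_nonneg μ)] at this
  rw [Complex.normSq_apply]
  rcases mul_eq_zero.mp him with hreal | hre
  · rw [hreal, mul_zero, add_zero, ← sq, sq_lt_one_iff_abs_lt_one, abs_lt]
    rw [hreal] at hre
    -- the real roots `μ.re`, `t - μ.re` have product `d < 1`; the polynomial is positive at `±1`
    have hp₁ : 0 < (1 - μ.re) * (1 - (t - μ.re)) := by nlinarith
    have hp₂ : 0 < (1 + μ.re) * (1 + (t - μ.re)) := by nlinarith
    have hprod : μ.re * (t - μ.re) < 1 := by nlinarith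
    constructor
    · by_contra! h
      nlinarith
    · by_contra! h
      nlinarith
  · nlinarith

theorem Matrix.sq_sub_trace_mul_add_det_eq_zero_of_mem_spectrum_map_ofReal
    {A : Matrix (Fin 2) (Fin 2) ℝ} {μ : ℂ} (hμ : μ ∈ spectrum ℂ (A.map (fun t : ℝ => (t : ℂ)))) :
    μ ^ 2 - A.trace * μ + A.det = 0 := by
  have h := (mem_spectrum_iff_isRoot_charpoly.mp hμ).eq_zero
  simpa [charpoly_fin_two, trace_fin_two, det_fin_two] using h

theorem Matrix.norm_lt_one_of_mem_spectrum_map_ofReal_of_nonneg_fin_two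
    {A : Matrix (Fin 2) (Fin 2) ℝ} (hA : ∀ i j, 0 ≤ A i j) (h₀₀ : A 0 0 < 1) (h₁₁ : A 1 1 < 1)
    (hoff : A 0 1 * A 1 0 < (1 - A 0 0) * (1 - A 1 1)) :
    ∀ μ ∈ spectrum ℂ (A.map (fun t : ℝ => (t : ℂ))), ‖μ‖ < 1 := by
  intro μ hμ
  have hbc := mul_nonneg (hA 0 1) (hA 1 0)
  have hdet : A.det < 1 := by
    rw [det_fin_two]
    nlinarith [mul_lt_one_of_nonneg_of_lt_one_left (hA 0 0) h₀₀ h₁₁.le]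
  have htr : |A.trace| < 1 + A.det := by
    rw [trace_fin_two, abs_of_nonneg (add_nonneg (hA 0 0) (hA 1 1)), det_fin_two]
    linarith
  exact Complex.norm_lt_one_of_sq_sub_mul_add_eq_zero
    (sq_sub_trace_mul_add_det_eq_zero_of_mem_spectrum_map_ofReal hμ) hdet htr

namespace DRFGT

theorem sixteen_mul_Theta_lt_of_step_lt {σW L' α : ℝ} (hσ0 : 0 ≤ σW) (hσ1 : σW < 1)
    (hL' : 0 < L') (hαlt : α < (1 - σW ^ 2) ^ 2 / (16 * L' * (1 + σW ^ 2))) :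
    16 * (L' * α * ((1 + σW ^ 2) / (1 - σW ^ 2))) < 1 - σW ^ 2 := by
  have hu : 0 < 1 - σW ^ 2 := by nlinarith
  rw [lt_div_iff₀ (by positivity)] at hαlt
  rw [mul_div_assoc', mul_div_assoc', div_lt_iff₀ hu]
  nlinarith

/-- stability of the consensus-error LTI system. If
`0 < α < (1−σ_W²)²/(16L'(1+σ_W²))`, then the spectral radius of `G̃` is strictly less than `1`,
i.e. every complex eigenvalue `μ` of `G̃` satisfies `‖μ‖ < 1`. -/
theorem Gtilde_spectral_radius_lt_one (σW L' α : ℝ)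
    (hσ0 : 0 ≤ σW) (hσ1 : σW < 1) (hL' : 0 < L') (hα : 0 < α)
    (hαlt : α < (1 - σW ^ 2) ^ 2 / (16 * L' * (1 + σW ^ 2))) :
    ∀ μ ∈ spectrum ℂ ((Gtilde σW L' α).map (fun t : ℝ => (t : ℂ))), ‖μ‖ < 1 := by
  have hB := sixteen_mul_Theta_lt_of_step_lt hσ0 hσ1 hL' hαlt
  have hu : 0 < 1 - σW ^ 2 := by nlinarith
  have hΘ : 1 ≤ (1 + σW ^ 2) / (1 - σW ^ 2) := by rw [le_div_iff₀ hu]; nlinarith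
  rw [Gtilde]
  generalize (1 + σW ^ 2) / (1 - σW ^ 2) = Θ at hB hΘ ⊢
  have he : α ^ 2 * L' ^ 2 * Θ ≤ (L' * α * Θ) ^ 2 := by
    nlinarith [mul_nonneg (mul_nonneg (sq_nonneg α) (sq_nonneg L')) (sub_nonneg.2 hΘ)]
  have hB0 : 0 < L' * α * Θ := by positivity
  refine Matrix.norm_lt_one_of_mem_spectrum_map_ofReal_of_nonneg_fin_two (fun i j => ?_) ?_ ?_ ?_
  · fin_cases i <;> fin_cases j <;>
      simp only [Fin.zero_eta, Fin.mk_one, of_apply, cons_val', cons_val_zero, cons_val_one,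
        cons_val_fin_one] <;> positivity
  all_goals
    simp only [of_apply, cons_val', cons_val_zero, cons_val_one, cons_val_fin_one]
    nlinarith

end DRFGT
end
end
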